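/- arXiv:1809.08930 — 3 statements merged into one kernel-verified Lean document; each statement's English description precedes it below -/
import Mathlib

section
/- Let H be a norm on ℝ^N, C² away from 0, with dual norm H₀, 1 < p < N, and 0 < r < R. Then the radial function v(x) = (C_r − C_R)·(H₀(x)^{(p−N)/(p−1)} − R^{(p−N)/(p−1)})/(r^{(p−N)/(p−1)} − R^{(p−N)/(p−1)}) + C_R satisfies the Finsler p-Laplace equation div(H(∇v)^{p−1} ∇_ξ H(∇v)) = 0 in the weak sense in the annulus {r < H₀(x) < R}. -/
/-!
The dual gauge `H₀ x = ⨆ ξ ≠ 0, ⟪x, ξ⟫ / H ξ` is attained at some `ξ` with `H ξ = 1`. The functions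
`y ↦ ⟪y, ξ⟫` and `η ↦ ⟪x, η⟫` touch `H₀` and `η ↦ H₀ x * H η` from below at `x` and at `ξ`, so
`∇H₀ x = ξ` and `∇H ξ = x / H₀ x`. Hence the Finsler `p`-flux of a radial function `u ∘ H₀` is
`|u'| ^ (p - 2) * u' / H₀ x • x`, which for `u s = s ^ ((p - N) / (p - 1))` is a constant multiple
of `H₀ x ^ (-N) • x`. This field is weakly divergence free because `w = H₀ ^ (-N)` is homogeneous of
degree `-N`: by the change of variables `x ↦ t • x`, `t ↦ ∫ φ (t • x) * w x` is constant, and its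
derivative at `t = 1` is `∫ ⟪x, ∇φ x⟫ * w x`.
-/

open scoped RealInnerProductSpace
open MeasureTheory Set Filter Topology InnerProductSpace Module

section Gradient

variable {E : Type*} [NormedAddCommGroup E] [InnerProductSpace ℝ E] [CompleteSpace E]
  {f g : E → ℝ} {f' g' x : E}

theorem HasGradientAt.eq_of_le_of_eq (hf : HasGradientAt f f' x) (hg : HasGradientAt g g' x)
    (hle : ∀ᶠ y in 𝓝 x, g y ≤ f y) (heq : g x = f x) : f' = g' := by
  have hmin : IsLocalMin (fun y => f y - g y) x :=
    hle.mono fun y hy => by simp only [heq, sub_self, sub_nonneg, hy]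
  have := hmin.hasFDerivAt_eq_zero (hf.hasFDerivAt.sub hg.hasFDerivAt)
  exact (toDual ℝ E).injective (sub_eq_zero.1 this)

theorem hasGradientAt_inner_left (ξ x : E) : HasGradientAt (fun y => ⟪y, ξ⟫) ξ x := by
  simp_rw [real_inner_comm ξ]
  exact (toDual ℝ E ξ).hasFDerivAt

theorem hasGradientAt_inner_right (x ξ : E) : HasGradientAt (fun η => ⟪x, η⟫) x ξ :=
  (toDual ℝ E x).hasFDerivAt

theorem HasGradientAt.const_mul (c : ℝ) (hf : HasGradientAt f f' x) :
    HasGradientAt (fun y => c * f y) (c • f') x := by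
  rw [hasGradientAt_iff_hasFDerivAt, map_smul]
  exact hf.hasFDerivAt.const_mul c

theorem HasGradientAt.comp_smul {a : ℝ} (hf : HasGradientAt f f' (a • x)) :
    HasGradientAt (fun y => f (a • y)) (a • f') x := by
  refine (hf.hasFDerivAt.comp x ((hasFDerivAt_id x).const_smul a)).congr_fderiv ?_
  ext y
  simp

theorem HasDerivAt.comp_hasGradientAt {u : ℝ → ℝ} {u' : ℝ} (hu : HasDerivAt u u' (f x))
    (hf : HasGradientAt f f' x) : HasGradientAt (u ∘ f) (u' • f') x := by
  rw [hasGradientAt_iff_hasFDerivAt, map_smul]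
  exact hu.comp_hasFDerivAt x hf.hasFDerivAt

end Gradient

section Dilation

theorem comp_smul_mul_eq_of_homogeneous {E : Type*} [AddCommGroup E] [Module ℝ E] {w φ : E → ℝ}
    (hw : ∀ t : ℝ, 0 < t → ∀ x, w (t • x) = (t ^ finrank ℝ E)⁻¹ * w x) {t : ℝ} (ht : 0 < t)
    (x : E) : φ (t • x) * w x = t ^ finrank ℝ E * (φ (t • x) * w (t • x)) := by
  rw [hw t ht]
  field_simp

variable {E : Type*} [NormedAddCommGroup E] [NormedSpace ℝ E] [MeasurableSpace E] [BorelSpace E]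
  (μ : Measure E) [μ.IsAddHaarMeasure] {w φ : E → ℝ}

theorem exists_integrable_bound_fderiv_comp_smul_mul (hwc : ContinuousOn w {0}ᶜ)
    (hφ : ContDiff ℝ 1 φ) (hφc : HasCompactSupport φ) (h0 : 0 ∉ tsupport φ) :
    ∃ bound : E → ℝ, Integrable bound μ ∧
      ∀ x, ∀ t ∈ Metric.ball (1 : ℝ) (1 / 2), ‖fderiv ℝ φ (t • x) x * w x‖ ≤ bound x := by
  obtain ⟨M, hM⟩ := (hφ.continuous_fderiv one_ne_zero).bounded_above_of_compact_support
    (hφc.fderiv (𝕜 := ℝ))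
  have hball : ∀ t ∈ Metric.closedBall (1 : ℝ) (1 / 2), 0 < t := fun t ht => by
    rw [Metric.mem_closedBall, Real.dist_eq, abs_le] at ht
    linarith [ht.1]
  -- every `x` with `t • x ∈ tsupport φ` for some `t` near `1` lies in this compact set
  set K := (fun q : ℝ × E => q.1⁻¹ • q.2) '' (Metric.closedBall 1 (1 / 2) ×ˢ tsupport φ)
  have hK : IsCompact K :=
    ((isCompact_closedBall _ _).prod hφc).image_of_continuousOn
      ((continuousOn_fst.inv₀ fun q hq => (hball q.1 hq.1).ne').smul continuousOn_snd)
  have hK0 : K ⊆ {0}ᶜ := by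
    rintro _ ⟨q, hq, rfl⟩ h
    rw [mem_singleton_iff, smul_eq_zero, inv_eq_zero] at h
    exact h.elim (hball q.1 hq.1).ne' fun h => h0 (h ▸ hq.2)
  refine ⟨K.indicator fun x => M * ‖x‖ * |w x|, (integrable_indicator_iff hK.measurableSet).2 <|
    ((continuousOn_const.mul continuous_norm.continuousOn).mul
      (hwc.mono hK0).abs).integrableOn_compact hK, fun x t ht => ?_⟩
  by_cases hx : t • x ∈ tsupport φ
  · have hxK : x ∈ K := ⟨(t, t • x), ⟨Metric.ball_subset_closedBall ht, hx⟩,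
      inv_smul_smul₀ (hball t (Metric.ball_subset_closedBall ht)).ne' x⟩
    rw [indicator_of_mem hxK, norm_mul, Real.norm_eq_abs (w x)]
    gcongr
    exact ((fderiv ℝ φ (t • x)).le_opNorm x).trans (by gcongr; exact hM _)
  · have hM0 : 0 ≤ M := (norm_nonneg _).trans (hM 0)
    rw [fderiv_of_notMem_tsupport ℝ hx]
    simpa using indicator_nonneg (fun x _ => by positivity) x

theorem hasDerivAt_integral_comp_smul_mul
    (hw : ∀ t : ℝ, 0 < t → ∀ x, w (t • x) = (t ^ finrank ℝ E)⁻¹ * w x)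
    (hwc : ContinuousOn w {0}ᶜ) (hφ : ContDiff ℝ 1 φ) (hφc : HasCompactSupport φ)
    (h0 : 0 ∉ tsupport φ) :
    HasDerivAt (fun t : ℝ => ∫ x, φ (t • x) * w x ∂μ) (∫ x, fderiv ℝ φ x x * w x ∂μ) 1 := by
  have hsupp : tsupport φ ⊆ {0}ᶜ := subset_compl_singleton_iff.2 h0
  have hG : Continuous fun x => φ x * w x :=
    (hφ.continuous.continuousOn.mul hwc).continuous_of_tsupport_subset isOpen_compl_singleton
      (tsupport_mul_subset_left.trans hsupp)
  have hDsupp : tsupport (fun x => fderiv ℝ φ x x) ⊆ tsupport φ := by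
    refine (closure_mono fun x hx => ?_).trans (tsupport_fderiv_subset ℝ (f := φ))
    rw [Function.mem_support] at hx ⊢
    exact fun h => hx (by simp [h])
  have hDG : Continuous fun x => fderiv ℝ φ x x * w x :=
    (((hφ.continuous_fderiv one_ne_zero).clm_apply continuous_id).continuousOn.mul
      hwc).continuous_of_tsupport_subset isOpen_compl_singleton
      (tsupport_mul_subset_left.trans (hDsupp.trans hsupp))
  obtain ⟨bound, hbound, hdom⟩ := exists_integrable_bound_fderiv_comp_smul_mul μ hwc hφ hφc h0
  have key := hasDerivAt_integral_of_dominated_loc_of_deriv_le (μ := μ)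
    (F := fun t x => φ (t • x) * w x) (F' := fun t x => fderiv ℝ φ (t • x) x * w x)
    (Metric.ball_mem_nhds 1 one_half_pos) ?_ ?_ ?_ (ae_of_all _ hdom) hbound
    (ae_of_all _ fun x t _ => ?_)
  · simpa only [one_smul] using key.2
  · filter_upwards [Ioi_mem_nhds one_pos] with t ht
    simp_rw [comp_smul_mul_eq_of_homogeneous hw ht]
    exact (continuous_const.mul (hG.comp (continuous_const_smul t))).aestronglyMeasurable
  · simpa using hG.integrable_of_hasCompactSupport hφc.mul_right
  · simpa using hDG.aestronglyMeasurable
  · simpa using ((hφ.differentiable one_ne_zero (t • x)).hasFDerivAt.comp_hasDerivAt t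
      ((hasDerivAt_id t).smul_const x)).mul_const (w x)

variable [FiniteDimensional ℝ E]

theorem integral_comp_smul_mul_of_homogeneous
    (hw : ∀ t : ℝ, 0 < t → ∀ x, w (t • x) = (t ^ finrank ℝ E)⁻¹ * w x) {t : ℝ} (ht : 0 < t) :
    ∫ x, φ (t • x) * w x ∂μ = ∫ x, φ x * w x ∂μ := by
  simp_rw [comp_smul_mul_eq_of_homogeneous hw ht]
  rw [integral_const_mul, Measure.integral_comp_smul μ (fun x => φ x * w x) t, smul_eq_mul,
    abs_of_pos (by positivity), mul_inv_cancel_left₀ (by positivity)]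

theorem integral_fderiv_apply_self_mul_eq_zero
    (hw : ∀ t : ℝ, 0 < t → ∀ x, w (t • x) = (t ^ finrank ℝ E)⁻¹ * w x)
    (hwc : ContinuousOn w {0}ᶜ) (hφ : ContDiff ℝ 1 φ) (hφc : HasCompactSupport φ)
    (h0 : 0 ∉ tsupport φ) :
    ∫ x, fderiv ℝ φ x x * w x ∂μ = 0 := by
  have hconst : (fun t : ℝ => ∫ x, φ (t • x) * w x ∂μ) =ᶠ[𝓝 1] fun _ => ∫ x, φ x * w x ∂μ := by
    filter_upwards [Ioi_mem_nhds one_pos] with t ht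
    exact integral_comp_smul_mul_of_homogeneous μ hw ht
  exact (hasDerivAt_integral_comp_smul_mul μ hw hwc hφ hφc h0).unique
    ((hasDerivAt_const 1 _).congr_of_eventuallyEq hconst)

end Dilation

theorem abs_mul_rpow_rpow_mul_div_eq {p α : ℝ} {n : ℕ} (hα : (α - 1) * (p - 1) = 1 - n)
    (a : ℝ) {s : ℝ} (hs : 0 < s) :
    |a * s ^ (α - 1)| ^ (p - 2) * (a * s ^ (α - 1)) / s = |a| ^ (p - 2) * a * (s ^ n)⁻¹ := by
  have hexp : s ^ ((α - 1) * (p - 2)) * s ^ (α - 1) / s = (s ^ n)⁻¹ := by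
    rw [← Real.rpow_add hs, ← Real.rpow_sub_one hs.ne', ← Real.rpow_natCast,
      ← Real.rpow_neg hs.le]
    congr 1
    linear_combination hα
  rw [abs_mul, abs_of_pos (Real.rpow_pos_of_pos hs _), Real.mul_rpow (abs_nonneg a)
    (Real.rpow_pos_of_pos hs _).le, ← Real.rpow_mul hs.le, ← hexp]
  ring

section Gauge

variable {E : Type*} [NormedAddCommGroup E] [InnerProductSpace ℝ E]

structure IsGauge (H : E → ℝ) : Prop where
  nonneg : ∀ ξ, 0 ≤ H ξ
  eq_zero_iff : ∀ ξ, H ξ = 0 ↔ ξ = 0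
  map_smul : ∀ (t : ℝ) ξ, H (t • ξ) = |t| * H ξ
  continuousOn : ContinuousOn H {0}ᶜ

-- `⨆` of reals not bounded above is `0`; for a gauge on a finite-dimensional space the supremum
-- is attained (`IsGauge.exists_dualGauge_eq_inner`).
noncomputable def dualGauge (H : E → ℝ) (x : E) : ℝ :=
  ⨆ ξ : {ξ : E // ξ ≠ 0}, ⟪x, ξ.1⟫ / H ξ.1

theorem dualGauge_zero (H : E → ℝ) : dualGauge H 0 = 0 := by
  simp [dualGauge]

theorem dualGauge_smul (H : E → ℝ) {t : ℝ} (ht : 0 ≤ t) (x : E) :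
    dualGauge H (t • x) = t * dualGauge H x := by
  simp only [dualGauge, Real.mul_iSup_of_nonneg ht, real_inner_smul_left, mul_div_assoc]

theorem ne_zero_of_lt_dualGauge {H : E → ℝ} {r : ℝ} (hr : 0 ≤ r) {x : E}
    (h : r < dualGauge H x) : x ≠ 0 := by
  rintro rfl
  rw [dualGauge_zero] at h
  linarith

noncomputable def finslerFlux [CompleteSpace E] (H : E → ℝ) (p : ℝ) (ξ : E) : E :=
  H ξ ^ (p - 1) • gradient H ξ

namespace IsGauge

variable {H : E → ℝ} (hH : IsGauge H)
include hH

theorem pos {ξ : E} (hξ : ξ ≠ 0) : 0 < H ξ :=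
  (hH.nonneg ξ).lt_of_ne fun h => hξ ((hH.eq_zero_iff ξ).1 h.symm)

theorem map_inv_smul_self {ξ : E} (hξ : ξ ≠ 0) : H ((H ξ)⁻¹ • ξ) = 1 := by
  rw [hH.map_smul, abs_of_pos (inv_pos.2 (hH.pos hξ)), inv_mul_cancel₀ (hH.pos hξ).ne']

theorem inner_smul_div {t : ℝ} (ht : 0 < t) (x η : E) :
    ⟪x, t • η⟫ / H (t • η) = ⟪x, η⟫ / H η := by
  rw [real_inner_smul_right, hH.map_smul, abs_of_pos ht, mul_div_mul_left _ _ ht.ne']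

theorem finslerFlux_smul [CompleteSpace E] {p : ℝ} (hp : 1 < p) {ξ g : E} (hξ : H ξ = 1)
    (hg : HasGradientAt H g ξ) (c : ℝ) : finslerFlux H p (c • ξ) = (|c| ^ (p - 2) * c) • g := by
  rw [finslerFlux]
  rcases eq_or_ne c 0 with rfl | hc
  · simp [(hH.eq_zero_iff 0).2 rfl, Real.zero_rpow (sub_pos.2 hp).ne']
  have hscale : (fun η => |c| * H (c⁻¹ • η)) = H := funext fun η => by
    rw [hH.map_smul, abs_inv, ← mul_assoc, mul_inv_cancel₀ (abs_ne_zero.2 hc), one_mul]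
  have hgrad : HasGradientAt H ((|c| * c⁻¹) • g) (c • ξ) := by
    rw [← hscale, mul_smul]
    exact (HasGradientAt.comp_smul (by rwa [inv_smul_smul₀ hc])).const_mul |c|
  have habs : 0 < |c| := abs_pos.2 hc
  rw [hgrad.gradient, hH.map_smul, hξ, mul_one, smul_smul, show p - 1 = p - 2 + 1 by ring,
    Real.rpow_add habs, Real.rpow_one]
  congr 1
  field_simp
  exact sq_abs c

variable [FiniteDimensional ℝ E]

theorem exists_forall_inner_div_le [Nontrivial E] (x : E) :
    ∃ ξ, H ξ = 1 ∧ ∀ η ≠ 0, ⟪x, η⟫ / H η ≤ ⟪x, ξ⟫ := by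
  have hsphere : Metric.sphere (0 : E) 1 ⊆ {0}ᶜ := fun ξ hξ h => by simp_all
  have hcont : ContinuousOn (fun ξ => ⟪x, ξ⟫ / H ξ) (Metric.sphere 0 1) :=
    (continuous_const.inner continuous_id).continuousOn.div (hH.continuousOn.mono hsphere)
      fun ξ hξ => (hH.pos (hsphere hξ)).ne'
  obtain ⟨ξ, hξ, hmax⟩ := (isCompact_sphere (0 : E) 1).exists_isMaxOn
    (NormedSpace.sphere_nonempty.2 zero_le_one) hcont
  have hξ0 : ξ ≠ 0 := hsphere hξ
  refine ⟨(H ξ)⁻¹ • ξ, hH.map_inv_smul_self hξ0, fun η hη => ?_⟩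
  have hnorm : ‖η‖⁻¹ • η ∈ Metric.sphere (0 : E) 1 := by
    simp [norm_smul, hη]
  calc ⟪x, η⟫ / H η = ⟪x, ‖η‖⁻¹ • η⟫ / H (‖η‖⁻¹ • η) :=
        (hH.inner_smul_div (inv_pos.2 (norm_pos_iff.2 hη)) x η).symm
    _ ≤ ⟪x, ξ⟫ / H ξ := hmax hnorm
    _ = ⟪x, (H ξ)⁻¹ • ξ⟫ := by rw [real_inner_smul_right, div_eq_inv_mul]

theorem inner_le_dualGauge_mul (x ξ : E) : ⟪x, ξ⟫ ≤ dualGauge H x * H ξ := by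
  rcases eq_or_ne ξ 0 with rfl | hξ
  · simp [(hH.eq_zero_iff 0).2 rfl]
  have : Nontrivial E := nontrivial_of_ne ξ 0 hξ
  obtain ⟨ξ₀, -, hmax⟩ := hH.exists_forall_inner_div_le x
  have hbdd : BddAbove (range fun η : {η : E // η ≠ 0} => ⟪x, η.1⟫ / H η.1) :=
    ⟨_, forall_mem_range.2 fun η => hmax η.1 η.2⟩
  exact (div_le_iff₀ (hH.pos hξ)).1 (le_ciSup hbdd ⟨ξ, hξ⟩)

theorem exists_dualGauge_eq_inner [Nontrivial E] (x : E) :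
    ∃ ξ, H ξ = 1 ∧ dualGauge H x = ⟪x, ξ⟫ := by
  obtain ⟨ξ, hξ, hmax⟩ := hH.exists_forall_inner_div_le x
  have : Nonempty {η : E // η ≠ 0} := nonempty_subtype.2 (exists_ne 0)
  refine ⟨ξ, hξ, le_antisymm (ciSup_le fun η => hmax η.1 η.2) ?_⟩
  simpa [hξ] using hH.inner_le_dualGauge_mul x ξ

theorem dualGauge_pos {x : E} (hx : x ≠ 0) : 0 < dualGauge H x := by
  have h := hH.inner_le_dualGauge_mul x x
  rw [real_inner_self_eq_norm_sq] at h
  exact pos_of_mul_pos_left ((by positivity : (0 : ℝ) < ‖x‖ ^ 2).trans_le h) (hH.nonneg x)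

theorem gradient_dualGauge_eq {x ξ : E} (hd : DifferentiableAt ℝ (dualGauge H) x)
    (hξ : H ξ = 1) (heq : dualGauge H x = ⟪x, ξ⟫) : gradient (dualGauge H) x = ξ :=
  hd.hasGradientAt.eq_of_le_of_eq (hasGradientAt_inner_left ξ x)
    (Eventually.of_forall fun y => by simpa [hξ] using hH.inner_le_dualGauge_mul y ξ) heq.symm

theorem hasGradientAt_of_dualGauge_eq_inner {x ξ : E} (hx : x ≠ 0)
    (hd : DifferentiableAt ℝ H ξ) (hξ : H ξ = 1) (heq : dualGauge H x = ⟪x, ξ⟫) :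
    HasGradientAt H ((dualGauge H x)⁻¹ • x) ξ := by
  have hgrad : dualGauge H x • gradient H ξ = x :=
    (hd.hasGradientAt.const_mul (dualGauge H x)).eq_of_le_of_eq (hasGradientAt_inner_right x ξ)
      (Eventually.of_forall (hH.inner_le_dualGauge_mul x)) (by rw [hξ, mul_one, heq])
  rw [← (eq_inv_smul_iff₀ (hH.dualGauge_pos hx).ne').2 hgrad]
  exact hd.hasGradientAt

theorem finslerFlux_gradient_comp_dualGauge {p : ℝ} (hp : 1 < p) (hd : DifferentiableOn ℝ H {0}ᶜ)
    (hd₀ : DifferentiableOn ℝ (dualGauge H) {0}ᶜ) {u : ℝ → ℝ} {u' : ℝ} {x : E} (hx : x ≠ 0)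
    (hu : HasDerivAt u u' (dualGauge H x)) :
    finslerFlux H p (gradient (u ∘ dualGauge H) x) = (|u'| ^ (p - 2) * u' / dualGauge H x) • x := by
  have : Nontrivial E := nontrivial_of_ne x 0 hx
  have hdx : DifferentiableAt ℝ (dualGauge H) x :=
    hd₀.differentiableAt (isOpen_compl_singleton.mem_nhds hx)
  obtain ⟨ξ, hξ, heq⟩ := hH.exists_dualGauge_eq_inner x
  have hξ0 : ξ ≠ 0 := by
    rintro rfl
    simp [(hH.eq_zero_iff 0).2 rfl] at hξ
  have hdξ : DifferentiableAt ℝ H ξ := hd.differentiableAt (isOpen_compl_singleton.mem_nhds hξ0)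
  rw [(hu.comp_hasGradientAt hdx.hasGradientAt).gradient, hH.gradient_dualGauge_eq hdx hξ heq,
    hH.finslerFlux_smul hp hξ (hH.hasGradientAt_of_dualGauge_eq_inner hx hdξ hξ heq),
    smul_smul, div_eq_mul_inv]

theorem finslerFlux_gradient_rpow_comp_dualGauge {p α a b : ℝ} {n : ℕ} (hp : 1 < p)
    (hα : (α - 1) * (p - 1) = 1 - n) (hd : DifferentiableOn ℝ H {0}ᶜ)
    (hd₀ : DifferentiableOn ℝ (dualGauge H) {0}ᶜ) {x : E} (hx : x ≠ 0) :
    finslerFlux H p (gradient ((fun s => a * s ^ α + b) ∘ dualGauge H) x) =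
      (|a * α| ^ (p - 2) * (a * α) * (dualGauge H x ^ n)⁻¹) • x := by
  have hu : HasDerivAt (fun s => a * s ^ α + b) (a * α * dualGauge H x ^ (α - 1))
      (dualGauge H x) := by
    simpa [mul_assoc] using
      ((Real.hasDerivAt_rpow_const (Or.inl (hH.dualGauge_pos hx).ne')).const_mul a).add_const b
  rw [hH.finslerFlux_gradient_comp_dualGauge hp hd hd₀ hx hu,
    abs_mul_rpow_rpow_mul_div_eq hα _ (hH.dualGauge_pos hx)]

theorem integral_fderiv_apply_self_mul_inv_dualGauge_pow [MeasurableSpace E] [BorelSpace E]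
    (μ : Measure E) [μ.IsAddHaarMeasure] (hc : ContinuousOn (dualGauge H) {0}ᶜ) {φ : E → ℝ}
    (hφ : ContDiff ℝ 1 φ) (hφc : HasCompactSupport φ) (h0 : 0 ∉ tsupport φ) :
    ∫ x, fderiv ℝ φ x x * (dualGauge H x ^ finrank ℝ E)⁻¹ ∂μ = 0 :=
  integral_fderiv_apply_self_mul_eq_zero μ
    (fun t ht x => by rw [dualGauge_smul H ht.le, mul_pow, mul_inv])
    ((hc.pow _).inv₀ fun x hx => pow_ne_zero _ (hH.dualGauge_pos hx).ne') hφ hφc h0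

end IsGauge

end Gauge

theorem radial_solution_finsler_p_harmonic_general
    (N : ℕ) (p : ℝ) (hp : 1 < p)
    (H H₀ : EuclideanSpace ℝ (Fin N) → ℝ)
    (hNonneg : ∀ ξ, 0 ≤ H ξ)
    (hZero : ∀ ξ, H ξ = 0 ↔ ξ = 0)
    (hHom : ∀ (t : ℝ) (ξ : EuclideanSpace ℝ (Fin N)), H (t • ξ) = |t| * H ξ)
    (hC2 : ContDiffOn ℝ 2 H {(0 : EuclideanSpace ℝ (Fin N))}ᶜ)
    (hH₀ : ∀ x, H₀ x = ⨆ ξ : {ξ : EuclideanSpace ℝ (Fin N) // ξ ≠ 0}, ⟪x, ξ.1⟫ / H ξ.1)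
    (hC2₀ : ContDiffOn ℝ 2 H₀ {(0 : EuclideanSpace ℝ (Fin N))}ᶜ)
    (r R Cr CR : ℝ) (hr : 0 < r)
    (v : EuclideanSpace ℝ (Fin N) → ℝ)
    (hv : ∀ x, v x = (Cr - CR) *
        ((H₀ x ^ ((p - N) / (p - 1)) - R ^ ((p - N) / (p - 1))) /
          (r ^ ((p - N) / (p - 1)) - R ^ ((p - N) / (p - 1)))) + CR) :
    ∀ φ : EuclideanSpace ℝ (Fin N) → ℝ, ContDiff ℝ 1 φ → HasCompactSupport φ →
      tsupport φ ⊆ {x | r < H₀ x ∧ H₀ x < R} →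
      ∫ x in {x : EuclideanSpace ℝ (Fin N) | r < H₀ x ∧ H₀ x < R},
        (H (gradient v x)) ^ (p - 1) *
          ⟪gradient H (gradient v x), gradient φ x⟫ = 0 := by
  intro φ hφ hφc hsupp
  obtain rfl : H₀ = dualGauge H := funext hH₀
  have hH : IsGauge H := ⟨hNonneg, hZero, hHom, hC2.continuousOn⟩
  set α := (p - N) / (p - 1)
  set k := (Cr - CR) / (r ^ α - R ^ α)
  have hα : (α - 1) * (p - 1) = 1 - finrank ℝ (EuclideanSpace ℝ (Fin N)) := by
    rw [finrank_euclideanSpace_fin]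
    linear_combination div_mul_cancel₀ (p - N) (sub_pos.2 hp).ne'
  have hv' : v = (fun s => k * s ^ α + (CR - k * R ^ α)) ∘ dualGauge H := funext fun y => by
    rw [hv, Function.comp_apply]
    ring
  set A := {x : EuclideanSpace ℝ (Fin N) | r < dualGauge H x ∧ dualGauge H x < R}
  have hA0 : A ⊆ {0}ᶜ := fun x hx => ne_zero_of_lt_dualGauge hr.le hx.1
  have hAopen : IsOpen A := (inter_eq_right.2 hA0) ▸
    hC2₀.continuousOn.isOpen_inter_preimage isOpen_compl_singleton isOpen_Ioo
  have hpoint : ∀ x ∈ A, H (gradient v x) ^ (p - 1) * ⟪gradient H (gradient v x), gradient φ x⟫ =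
      |k * α| ^ (p - 2) * (k * α) *
        (fderiv ℝ φ x x * (dualGauge H x ^ finrank ℝ (EuclideanSpace ℝ (Fin N)))⁻¹) :=
    fun x hx => by
      rw [← real_inner_smul_left, hv', ← finslerFlux,
        hH.finslerFlux_gradient_rpow_comp_dualGauge hp hα (hC2.differentiableOn two_ne_zero)
          (hC2₀.differentiableOn two_ne_zero) (hA0 hx),
        real_inner_smul_left, inner_gradient_right, conj_trivial]
      ring
  rw [setIntegral_congr_fun hAopen.measurableSet hpoint,
    setIntegral_eq_integral_of_forall_compl_eq_zero fun x hx => ?_, integral_const_mul,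
    hH.integral_fderiv_apply_self_mul_inv_dualGauge_pow volume hC2₀.continuousOn hφ hφc
      fun h => hA0 (hsupp h) rfl, mul_zero]
  simp [fderiv_of_notMem_tsupport ℝ fun h => hx (hsupp h)]

/-- The radial function
`v(x) = (C_r − C_R)(H₀(x)^{(p−N)/(p−1)} − R^{(p−N)/(p−1)})/(r^{(p−N)/(p−1)} − R^{(p−N)/(p−1)}) + C_R`,
`1 < p < N`, is a weak solution of the Finsler `p`-Laplace equation
`div(H(∇v)^{p−1} ∇_ξ H(∇v)) = 0` in the anisotropic annulus `{r < H₀ < R}`. -/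
theorem radial_solution_finsler_p_harmonic
    (N : ℕ) (p : ℝ) (hp : 1 < p) (hpN : p < N)
    (H H₀ : EuclideanSpace ℝ (Fin N) → ℝ)
    (hConv : ConvexOn ℝ Set.univ H)
    (hNonneg : ∀ ξ, 0 ≤ H ξ)
    (hZero : ∀ ξ, H ξ = 0 ↔ ξ = 0)
    (hHom : ∀ (t : ℝ) (ξ : EuclideanSpace ℝ (Fin N)), H (t • ξ) = |t| * H ξ)
    (hC2 : ContDiffOn ℝ 2 H {(0 : EuclideanSpace ℝ (Fin N))}ᶜ)
    (hStrict : StrictConvex ℝ {ξ : EuclideanSpace ℝ (Fin N) | H ξ < 1})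
    (hH₀ : ∀ x, H₀ x = ⨆ ξ : {ξ : EuclideanSpace ℝ (Fin N) // ξ ≠ 0}, ⟪x, ξ.1⟫ / H ξ.1)
    (hC2₀ : ContDiffOn ℝ 2 H₀ {(0 : EuclideanSpace ℝ (Fin N))}ᶜ)
    (r R Cr CR : ℝ) (hr : 0 < r) (hrR : r < R)
    (v : EuclideanSpace ℝ (Fin N) → ℝ)
    (hv : ∀ x, v x = (Cr - CR) *
        ((H₀ x ^ ((p - N) / (p - 1)) - R ^ ((p - N) / (p - 1))) /
          (r ^ ((p - N) / (p - 1)) - R ^ ((p - N) / (p - 1)))) + CR) :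
    ∀ φ : EuclideanSpace ℝ (Fin N) → ℝ, ContDiff ℝ 1 φ → HasCompactSupport φ →
      tsupport φ ⊆ {x | r < H₀ x ∧ H₀ x < R} →
      ∫ x in {x : EuclideanSpace ℝ (Fin N) | r < H₀ x ∧ H₀ x < R},
        (H (gradient v x)) ^ (p - 1) *
          ⟪gradient H (gradient v x), gradient φ x⟫ = 0 :=
  radial_solution_finsler_p_harmonic_general N p hp H H₀ hNonneg hZero hHom hC2 hH₀ hC2₀ r R Cr CR
    hr v hv
end

section
/- Let A be a symmetric positive semidefinite N×N real matrix with at least one zero eigenvalue (rank at most N−1), and let U be a symmetric N×N real matrix. Then Tr(A U A U) ≥ (1/(N−1)) · Tr(A U)². -/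
/-!
Write `A = Bᴴ B`. The symmetric matrix `M = B U Bᴴ` has `Tr M = Tr (A U)`, `Tr M² = Tr (A U A U)`
and rank at most `rank A ≤ N - 1`, so Cauchy–Schwarz over its nonzero eigenvalues gives
`(Tr M)² ≤ (N - 1) Tr M²`.
-/

open Matrix Finset

theorem sq_sum_le_card_support_mul_sum_sq {ι : Type*} [Fintype ι] (f : ι → ℝ) :
    (∑ i, f i) ^ 2 ≤ #{i | f i ≠ 0} * ∑ i, f i ^ 2 := by
  rw [← sum_filter_ne_zero, ← sum_filter_ne_zero (f := fun i => f i ^ 2)]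
  simpa only [ne_eq, pow_eq_zero_iff two_ne_zero] using sq_sum_le_card_mul_sum_sq

namespace Matrix.IsHermitian

variable {n : Type*} [Fintype n] [DecidableEq n] {M : Matrix n n ℝ}

theorem trace_mul_self_eq_sum_eigenvalues_sq (hM : M.IsHermitian) :
    (M * M).trace = ∑ i, hM.eigenvalues i ^ 2 := by
  have hVV := Unitary.coe_star_mul_self hM.eigenvectorUnitary
  have hspec := hM.spectral_theorem
  rw [Unitary.conjStarAlgAut_apply] at hspec
  set V := (hM.eigenvectorUnitary : Matrix n n ℝ)
  conv_lhs => rw [hspec]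
  rw [show ∀ D : Matrix n n ℝ,
      V * D * star V * (V * D * star V) = V * (D * (star V * V) * D) * star V
      from fun D => by simp only [mul_assoc], hVV, mul_one, diagonal_mul_diagonal, trace_mul_cycle,
    hVV, one_mul, trace_diagonal]
  simp [sq]

theorem trace_sq_le_rank_mul_trace_mul_self (hM : M.IsHermitian) :
    M.trace ^ 2 ≤ M.rank * (M * M).trace := by
  rw [hM.trace_eq_sum_eigenvalues, hM.trace_mul_self_eq_sum_eigenvalues_sq,
    hM.rank_eq_card_non_zero_eigs, Fintype.card_subtype]
  simpa using sq_sum_le_card_support_mul_sum_sq hM.eigenvalues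

end Matrix.IsHermitian

/-- For `A` symmetric positive semidefinite of rank at most `N−1` and `U` symmetric:
`Tr(AUAU) ≥ Tr(AU)²/(N−1)`. -/
theorem trace_AUAU_ge
    (N : ℕ) (hN : 2 ≤ N) (A U : Matrix (Fin N) (Fin N) ℝ)
    (hA : A.PosSemidef) (hrank : A.rank ≤ N - 1) (hU : U.IsSymm) :
    (1 / (N - 1 : ℝ)) * ((A * U).trace) ^ 2 ≤ (A * U * A * U).trace := by
  obtain ⟨B, rfl⟩ : ∃ B : Matrix (Fin N) (Fin N) ℝ, A = Bᴴ * B := by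
    open MatrixOrder in exact CStarAlgebra.nonneg_iff_eq_star_mul_self.mp hA.nonneg
  set M := B * U * Bᴴ
  have hUH : U.IsHermitian := by rw [IsHermitian, conjTranspose_eq_transpose_of_trivial]; exact hU
  have hMH : M.IsHermitian := isHermitian_mul_mul_conjTranspose B hUH
  have htrace : M.trace = (Bᴴ * B * U).trace := trace_mul_cycle _ _ _
  have htrace_sq : (M * M).trace = (Bᴴ * B * U * (Bᴴ * B) * U).trace := by
    simp only [M, ← mul_assoc]
    rw [trace_mul_comm]
    simp only [mul_assoc]
  have hMrank : M.rank ≤ N - 1 := calc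
    M.rank ≤ Bᴴ.rank := rank_mul_le_right _ _
    _ = (Bᴴ * B).rank := by rw [rank_conjTranspose, rank_conjTranspose_mul_self]
    _ ≤ N - 1 := hrank
  have hpos : (0 : ℝ) < N - 1 := sub_pos.mpr (Nat.one_lt_cast.mpr hN)
  have hMrank_cast : (M.rank : ℝ) ≤ N - 1 := by
    rw [← Nat.cast_one, ← Nat.cast_sub (by omega)]; exact_mod_cast hMrank
  rw [one_div_mul_eq_div, div_le_iff₀' hpos, ← htrace, ← htrace_sq]
  calc M.trace ^ 2 ≤ M.rank * (M * M).trace := hMH.trace_sq_le_rank_mul_trace_mul_self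
    _ ≤ (N - 1) * (M * M).trace := by
      gcongr
      simpa only [hMH.eq] using (posSemidef_conjTranspose_mul_self M).trace_nonneg
end

section
/- Let H be a norm on ℝ^N, C² away from 0, with positive semidefinite Hessian ∇²H(ξ) of rank N−1 for ξ ≠ 0, and let u be a C³ function with ∇u ≠ 0 on an open set. Set A = ∇H(∇u)·(∇²u ∇H(∇u)) + H(∇u)·Tr(∇²H(∇u)∇²u), B = (1/N)H^{p−1}(∇u)Tr(∇²H(∇u)∇²u) − ((N−1)/N)(p−1)H^{p−2}(∇u)∇H(∇u)·(∇²u ∇H(∇u)), C = (1/N)H(∇u)Tr(∇²H(∇u)∇²u) − ((N−1)/N)∇H(∇u)·(∇²u ∇H(∇u)), and a_{ij} = (1/p)∂²_{ξ_iξ_j}(H^p)(∇u). Then a_{ij} ∂²_{ξ_kξ_l}(H²)(∇u) u_{ik}u_{jl} ≥ (a_{ij}u_{ij}/N)·A + (N/(N−1))·B·C pointwise. -/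
/-!
Write `h = H(∇u)`, `g = ∇H(∇u)`, `Λ = ∇²H(∇u)` and `U = ∇²u`. Differentiating `H^p` and `H²`
twice gives `a = h^{p-1} Λ + (p-1) h^{p-2} g gᵀ` and `∇²(H²) = 2hΛ + 2 g gᵀ`, so the left-hand
side of the inequality expands to
`2 h^p Tr(ΛUΛU) + 2p h^{p-1} ⟨Ug, Λ Ug⟩ + 2(p-1) h^{p-2} (gᵀUg)²`,
whereas the right-hand side collapses to `h^p Tr(ΛU)² / (N-1) + (p-1) h^{p-2} (gᵀUg)²`.
The middle term is nonnegative because `Λ ⪰ 0`, and writing `Λ = BᵀB`, Cauchy–Schwarz on the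
diagonal of the symmetric matrix `BUBᵀ` gives `Tr(ΛU)² ≤ N Tr(ΛUΛU) ≤ 2(N-1) Tr(ΛUΛU)`.
-/

open Topology Matrix Finset

section Calculus

variable {E : Type*} [NormedAddCommGroup E] [NormedSpace ℝ E]

theorem iteratedFDeriv_two_rpow_comp_apply {H : E → ℝ} {ξ : E} (q : ℝ)
    (hH : ContDiffAt ℝ 2 H ξ) (hpos : 0 < H ξ) (v w : E) :
    iteratedFDeriv ℝ 2 (fun η => H η ^ q) ξ ![v, w] =
      q * (q - 1) * H ξ ^ (q - 2) * fderiv ℝ H ξ v * fderiv ℝ H ξ w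
        + q * H ξ ^ (q - 1) * iteratedFDeriv ℝ 2 H ξ ![v, w] := by
  have hdiff : HasFDerivAt H (fderiv ℝ H ξ) ξ := (hH.differentiableAt two_ne_zero).hasFDerivAt
  have hfderiv_near : fderiv ℝ (fun η => H η ^ q) =ᶠ[𝓝 ξ]
      fun y => (q * H y ^ (q - 1)) • fderiv ℝ H y := by
    filter_upwards [hH.eventually (by simp), hH.continuousAt (Ioi_mem_nhds hpos)] with y hy hy0
    exact ((Real.hasDerivAt_rpow_const (Or.inl (ne_of_gt hy0))).comp_hasFDerivAt y
      (hy.differentiableAt two_ne_zero).hasFDerivAt).fderiv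
  have hcoeff : HasFDerivAt (fun y => q * H y ^ (q - 1))
      ((q * ((q - 1) * H ξ ^ (q - 2))) • fderiv ℝ H ξ) ξ := by
    simpa [smul_smul, show q - 1 - 1 = q - 2 by ring] using
      ((Real.hasDerivAt_rpow_const (p := q - 1) (Or.inl hpos.ne')).comp_hasFDerivAt ξ
        hdiff).const_mul q
  have hsnd : HasFDerivAt (fun y => fderiv ℝ H y) (fderiv ℝ (fderiv ℝ H) ξ) ξ :=
    ((hH.fderiv_right (m := 1) le_rfl).differentiableAt one_ne_zero).hasFDerivAt
  have hfderiv_smul : HasFDerivAt (fun y => (q * H y ^ (q - 1)) • fderiv ℝ H y) _ ξ :=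
    hcoeff.smul hsnd
  rw [iteratedFDeriv_two_apply, iteratedFDeriv_two_apply, hfderiv_near.fderiv_eq,
    hfderiv_smul.fderiv]
  simp only [_root_.add_apply, _root_.smul_apply, ContinuousLinearMap.smulRight_apply,
    cons_val_zero, cons_val_one, smul_eq_mul]
  ring

theorem ContDiffAt.iteratedFDeriv_two_comm {u : E → ℝ} {x : E} (hu : ContDiffAt ℝ 2 u x)
    (v w : E) : iteratedFDeriv ℝ 2 u x ![v, w] = iteratedFDeriv ℝ 2 u x ![w, v] :=
  (hu.isSymmSndFDerivAt (by simp)).iteratedFDeriv_cons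

end Calculus

theorem EuclideanSpace.fderiv_single_eq_gradient_apply {ι : Type*} [Fintype ι] [DecidableEq ι]
    (f : EuclideanSpace ℝ ι → ℝ) (ξ : EuclideanSpace ℝ ι) (i : ι) :
    fderiv ℝ f ξ (EuclideanSpace.single i 1) = gradient f ξ i := by
  rw [gradient, ← InnerProductSpace.toDual_symm_apply, EuclideanSpace.inner_single_right]
  simp

namespace Matrix

variable {n : Type*} [Fintype n]

theorem IsSymm.trace_sq_le_card_mul_trace_mul_self {X : Matrix n n ℝ} (hX : X.IsSymm) :
    X.trace ^ 2 ≤ Fintype.card n * (X * X).trace := by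
  have hdiag : ∑ i, X i i ^ 2 ≤ (X * X).trace := by
    refine sum_le_sum fun i _ => ?_
    calc X i i ^ 2 ≤ ∑ j, X i j ^ 2 :=
          single_le_sum (f := fun j => X i j ^ 2) (fun _ _ => sq_nonneg _) (mem_univ i)
      _ = ∑ j, X i j * X j i := sum_congr rfl fun j _ => by rw [hX.apply i j, sq]
  calc X.trace ^ 2 ≤ Fintype.card n * ∑ i, X i i ^ 2 := sq_sum_le_card_mul_sum_sq
    _ ≤ Fintype.card n * (X * X).trace := by gcongr

open scoped MatrixOrder in
theorem PosSemidef.trace_mul_sq_le [DecidableEq n] {Λ U : Matrix n n ℝ} (hΛ : Λ.PosSemidef)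
    (hU : U.IsSymm) : (Λ * U).trace ^ 2 ≤ Fintype.card n * (Λ * U * (Λ * U)).trace := by
  obtain ⟨B, rfl⟩ := CStarAlgebra.nonneg_iff_eq_star_mul_self.mp hΛ.nonneg
  rw [star_eq_conjTranspose, conjTranspose_eq_transpose_of_trivial]
  have hX : (B * U * Bᵀ).IsSymm := by simp [IsSymm, transpose_mul, hU.eq, Matrix.mul_assoc]
  have htrace : (Bᵀ * B * U).trace = (B * U * Bᵀ).trace := by
    rw [Matrix.mul_assoc, trace_mul_comm, Matrix.mul_assoc]
  have htrace_sq : (Bᵀ * B * U * (Bᵀ * B * U)).trace = (B * U * Bᵀ * (B * U * Bᵀ)).trace := by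
    rw [show Bᵀ * B * U * (Bᵀ * B * U) = Bᵀ * (B * U * Bᵀ * B * U) by noncomm_ring,
      trace_mul_comm]
    congr 1
    noncomm_ring
  rw [htrace, htrace_sq]
  exact hX.trace_sq_le_card_mul_trace_mul_self

end Matrix

section FourIndexSums

variable {n : Type*} [Fintype n]

theorem sum_four_comm {M : Type*} [AddCommMonoid M] (f : n → n → n → n → M) :
    ∑ i, ∑ j, ∑ k, ∑ l, f i j k l = ∑ k, ∑ l, ∑ i, ∑ j, f i j k l :=
  calc ∑ i, ∑ j, ∑ k, ∑ l, f i j k l = ∑ i, ∑ k, ∑ j, ∑ l, f i j k l :=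
        sum_congr rfl fun _ _ => sum_comm
    _ = ∑ k, ∑ i, ∑ j, ∑ l, f i j k l := sum_comm
    _ = ∑ k, ∑ l, ∑ i, ∑ j, f i j k l :=
        sum_congr rfl fun _ _ => (sum_congr rfl fun _ _ => sum_comm).trans sum_comm

theorem sum_four_mul_mul {Λ U : Matrix n n ℝ} (hΛ : Λ.IsSymm) (hU : U.IsSymm) :
    ∑ i, ∑ j, ∑ k, ∑ l, Λ i j * Λ k l * U i k * U j l = (Λ * U * (Λ * U)).trace := by
  simp only [trace, Matrix.diag, mul_apply, sum_mul, mul_sum]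
  refine sum_congr rfl fun i _ => ?_
  rw [sum_congr rfl fun j _ => sum_comm, sum_comm, sum_congr rfl fun l _ => sum_comm]
  exact sum_congr rfl fun l _ => sum_congr rfl fun k _ => sum_congr rfl fun j _ => by
    rw [hΛ.apply k l, hU.apply i k]; ring

theorem sum_four_mul_vecMulVec (Λ U : Matrix n n ℝ) (g : n → ℝ) :
    ∑ i, ∑ j, ∑ k, ∑ l, Λ i j * (g k * g l) * U i k * U j l = U *ᵥ g ⬝ᵥ Λ *ᵥ (U *ᵥ g) := by
  simp only [dotProduct, mulVec, sum_mul, mul_sum]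
  refine sum_congr rfl fun i _ => sum_congr rfl fun j _ => sum_comm.trans ?_
  exact sum_congr rfl fun k _ => sum_congr rfl fun l _ => by ring

theorem sum_four_vecMulVec_mul {U : Matrix n n ℝ} (hU : U.IsSymm) (Λ : Matrix n n ℝ)
    (g : n → ℝ) :
    ∑ i, ∑ j, ∑ k, ∑ l, g i * g j * Λ k l * U i k * U j l = U *ᵥ g ⬝ᵥ Λ *ᵥ (U *ᵥ g) := by
  rw [sum_four_comm, ← sum_four_mul_vecMulVec]
  exact sum_congr rfl fun i _ => sum_congr rfl fun j _ => sum_congr rfl fun k _ =>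
    sum_congr rfl fun l _ => by rw [hU.apply i k, hU.apply j l]; ring

theorem sum_four_vecMulVec_vecMulVec (U : Matrix n n ℝ) (g : n → ℝ) :
    ∑ i, ∑ j, ∑ k, ∑ l, g i * g j * (g k * g l) * U i k * U j l =
      (∑ i, ∑ j, g i * U i j * g j) ^ 2 := by
  simp only [sq, sum_mul_sum]
  exact sum_congr rfl fun i _ => sum_congr rfl fun j _ => sum_congr rfl fun k _ =>
    sum_congr rfl fun l _ => by ring

variable {Λ U : Matrix n n ℝ} {g : n → ℝ} {α β γ δ : ℝ} {a M : n → n → ℝ}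

theorem sum_mul_eq_of_eq_add_vecMulVec (hU : U.IsSymm)
    (ha : ∀ i j, a i j = α * Λ i j + β * (g i * g j)) :
    ∑ i, ∑ j, a i j * U i j = α * (Λ * U).trace + β * ∑ i, ∑ j, g i * U i j * g j := by
  simp only [trace, Matrix.diag, mul_apply, ha, add_mul, sum_add_distrib, mul_sum]
  congr 1
  · exact sum_congr rfl fun i _ => sum_congr rfl fun j _ => by rw [hU.apply i j]; ring
  · exact sum_congr rfl fun i _ => sum_congr rfl fun j _ => by ring

theorem sum_four_eq_of_eq_add_vecMulVec (hΛ : Λ.IsSymm) (hU : U.IsSymm)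
    (ha : ∀ i j, a i j = α * Λ i j + β * (g i * g j))
    (hM : ∀ k l, M k l = γ * Λ k l + δ * (g k * g l)) :
    ∑ i, ∑ j, ∑ k, ∑ l, a i j * M k l * U i k * U j l =
      α * γ * (Λ * U * (Λ * U)).trace + (α * δ + β * γ) * (U *ᵥ g ⬝ᵥ Λ *ᵥ (U *ᵥ g))
        + β * δ * (∑ i, ∑ j, g i * U i j * g j) ^ 2 := by
  have hterm : ∀ i j k l, a i j * M k l * U i k * U j l =
      α * γ * (Λ i j * Λ k l * U i k * U j l) + α * δ * (Λ i j * (g k * g l) * U i k * U j l)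
        + β * γ * (g i * g j * Λ k l * U i k * U j l)
        + β * δ * (g i * g j * (g k * g l) * U i k * U j l) := fun i j k l => by
    rw [ha, hM]; ring
  simp only [hterm, sum_add_distrib, ← mul_sum]
  rw [sum_four_mul_mul hΛ hU, sum_four_mul_vecMulVec, sum_four_vecMulVec_mul hU,
    sum_four_vecMulVec_vecMulVec]
  ring

end FourIndexSums

theorem bochner_scalar_inequality {n p h c S T Q R : ℝ} (hn : 2 ≤ n) (hp : 1 ≤ p) (hh : 0 ≤ h)
    (hc : 0 ≤ c) (hQ : T ^ 2 ≤ n * Q) (hR : 0 ≤ R) :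
    ((h * c * T + (p - 1) * c * S) / n) * (S + h * T)
        + (n / (n - 1)) * ((1 / n) * (h * c) * T - ((n - 1) / n) * (p - 1) * c * S)
          * ((1 / n) * h * T - ((n - 1) / n) * S) ≤
      h * c * (2 * h) * Q + (h * c * 2 + (p - 1) * c * (2 * h)) * R + (p - 1) * c * 2 * S ^ 2 := by
  have hn1 : 0 < n - 1 := by linarith
  have hidentity : ((h * c * T + (p - 1) * c * S) / n) * (S + h * T)
        + (n / (n - 1)) * ((1 / n) * (h * c) * T - ((n - 1) / n) * (p - 1) * c * S)
          * ((1 / n) * h * T - ((n - 1) / n) * S) =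
      h ^ 2 * c * T ^ 2 / (n - 1) + (p - 1) * c * S ^ 2 := by
    field_simp
    ring
  have hQ_le : T ^ 2 ≤ 2 * (n - 1) * Q := by nlinarith [sq_nonneg T]
  have hTQ : h ^ 2 * c * T ^ 2 / (n - 1) ≤ 2 * h ^ 2 * c * Q := by
    rw [div_le_iff₀ hn1]
    nlinarith [mul_le_mul_of_nonneg_left hQ_le (by positivity : 0 ≤ h ^ 2 * c)]
  have hp1 : 0 ≤ p - 1 := by linarith
  rw [hidentity]
  nlinarith [mul_nonneg (mul_nonneg hh hc) hR, mul_nonneg (mul_nonneg hp1 hc) (sq_nonneg S),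
    mul_nonneg (mul_nonneg (mul_nonneg hp1 hc) hh) hR]

theorem bochner_inequality_of_eq_add_vecMulVec {n : Type*} [Fintype n] [DecidableEq n]
    (hn : 2 ≤ Fintype.card n) {p h : ℝ} (hp : 1 ≤ p) (hh : 0 < h) {Λ U : Matrix n n ℝ}
    (hΛ : Λ.PosSemidef) (hU : U.IsSymm) {g : n → ℝ} {a M : n → n → ℝ}
    (ha : ∀ i j, a i j = h ^ (p - 1) * Λ i j + (p - 1) * h ^ (p - 2) * (g i * g j))
    (hM : ∀ k l, M k l = 2 * h * Λ k l + 2 * (g k * g l)) :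
    let N : ℝ := Fintype.card n
    let S := ∑ i, ∑ j, g i * U i j * g j
    let T := ∑ i, ∑ j, Λ i j * U j i
    ((∑ i, ∑ j, a i j * U i j) / N) * (S + h * T)
        + (N / (N - 1)) * ((1 / N) * h ^ (p - 1) * T - ((N - 1) / N) * (p - 1) * h ^ (p - 2) * S)
          * ((1 / N) * h * T - ((N - 1) / N) * S) ≤
      ∑ i, ∑ j, ∑ k, ∑ l, a i j * M k l * U i k * U j l := by
  dsimp only
  have hT : ∑ i, ∑ j, Λ i j * U j i = (Λ * U).trace := rfl
  have hpow : h ^ (p - 1) = h * h ^ (p - 2) := by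
    rw [show p - 1 = 1 + (p - 2) by ring, Real.rpow_add hh, Real.rpow_one]
  rw [hpow] at ha ⊢
  rw [sum_mul_eq_of_eq_add_vecMulVec hU ha,
    sum_four_eq_of_eq_add_vecMulVec (isHermitian_iff_isSymm.mp hΛ.isHermitian) hU ha hM, hT]
  have hR : 0 ≤ U *ᵥ g ⬝ᵥ Λ *ᵥ (U *ᵥ g) := by
    simpa using hΛ.dotProduct_mulVec_nonneg (U *ᵥ g)
  exact bochner_scalar_inequality (by exact_mod_cast hn) hp hh.le
    (Real.rpow_nonneg hh.le (p - 2)) (hΛ.trace_mul_sq_le hU) hR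

theorem bochner_type_inequality_general
    (N : ℕ) (hN : 2 ≤ N) (p : ℝ) (hp : 1 < p)
    (H : EuclideanSpace ℝ (Fin N) → ℝ)
    (hNonneg : ∀ ξ, 0 ≤ H ξ)
    (hZero : ∀ ξ, H ξ = 0 ↔ ξ = 0)
    (hC2 : ContDiffOn ℝ 2 H {(0 : EuclideanSpace ℝ (Fin N))}ᶜ)
    (e : Fin N → EuclideanSpace ℝ (Fin N)) (he : ∀ i, e i = EuclideanSpace.single i 1)
    (hPSD : ∀ ξ : EuclideanSpace ℝ (Fin N), ξ ≠ 0 →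
      (Matrix.of fun i j : Fin N => iteratedFDeriv ℝ 2 H ξ ![e i, e j]).PosSemidef)
    (E : Set (EuclideanSpace ℝ (Fin N))) (hE : IsOpen E)
    (u : EuclideanSpace ℝ (Fin N) → ℝ) (hu : ContDiffOn ℝ 3 u E)
    (hgrad : ∀ x ∈ E, gradient u x ≠ 0) :
    ∀ x ∈ E,
      let ξ := gradient u x
      let Hv := H ξ
      let g := gradient H ξ
      let MH : Fin N → Fin N → ℝ := fun i j => iteratedFDeriv ℝ 2 H ξ ![e i, e j]
      let M2 : Fin N → Fin N → ℝ := fun k l =>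
        iteratedFDeriv ℝ 2 (fun η => (H η) ^ 2) ξ ![e k, e l]
      let Mu : Fin N → Fin N → ℝ := fun i j => iteratedFDeriv ℝ 2 u x ![e i, e j]
      let a : Fin N → Fin N → ℝ := fun i j =>
        (1 / p) * iteratedFDeriv ℝ 2 (fun η => H η ^ p) ξ ![e i, e j]
      let S := ∑ i, ∑ j, g i * Mu i j * g j
      let T := ∑ i, ∑ j, MH i j * Mu j i
      let A := S + Hv * T
      let B := (1 / N) * Hv ^ (p - 1) * T - ((N - 1 : ℝ) / N) * (p - 1) * Hv ^ (p - 2) * S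
      let C := (1 / N) * Hv * T - ((N - 1 : ℝ) / N) * S
      ((∑ i, ∑ j, a i j * Mu i j) / N) * A + ((N : ℝ) / (N - 1)) * B * C ≤
        ∑ i, ∑ j, ∑ k, ∑ l, a i j * M2 k l * Mu i k * Mu j l := by
  intro x hx
  dsimp only
  have hξ : gradient u x ≠ 0 := hgrad x hx
  set ξ := gradient u x
  have hHpos : 0 < H ξ := (hNonneg ξ).lt_of_ne' fun h0 => hξ ((hZero ξ).1 h0)
  have hHC2 : ContDiffAt ℝ 2 H ξ := hC2.contDiffAt (isOpen_compl_singleton.mem_nhds hξ)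
  have huC2 : ContDiffAt ℝ 2 u x := (hu.contDiffAt (hE.mem_nhds hx)).of_le (by norm_num)
  have hfderiv : ∀ i, fderiv ℝ H ξ (e i) = gradient H ξ i := fun i => by
    rw [he i, EuclideanSpace.fderiv_single_eq_gradient_apply]
  have ha : ∀ i j, 1 / p * iteratedFDeriv ℝ 2 (fun η => H η ^ p) ξ ![e i, e j] =
      H ξ ^ (p - 1) * iteratedFDeriv ℝ 2 H ξ ![e i, e j]
        + (p - 1) * H ξ ^ (p - 2) * (gradient H ξ i * gradient H ξ j) := fun i j => by
    rw [iteratedFDeriv_two_rpow_comp_apply p hHC2 hHpos, hfderiv, hfderiv]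
    field_simp
    ring
  have hM : ∀ k l, iteratedFDeriv ℝ 2 (fun η => H η ^ 2) ξ ![e k, e l] =
      2 * H ξ * iteratedFDeriv ℝ 2 H ξ ![e k, e l]
        + 2 * (gradient H ξ k * gradient H ξ l) := fun k l => by
    simp_rw [← Real.rpow_two]
    rw [iteratedFDeriv_two_rpow_comp_apply 2 hHC2 hHpos, hfderiv, hfderiv]
    norm_num
    ring
  have key := bochner_inequality_of_eq_add_vecMulVec (by simpa using hN) hp.le hHpos
    (hPSD ξ hξ) (U := Matrix.of fun i j => iteratedFDeriv ℝ 2 u x ![e i, e j])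
    (IsSymm.ext fun i j => huC2.iteratedFDeriv_two_comm _ _) ha hM
  rw [Fintype.card_fin] at key
  exact key

/-- The Bochner-type pointwise inequality (3.4):
`a_{ij} ∂²_{ξ_kξ_l}(H²)(∇u) u_{ik}u_{jl} ≥ (a_{ij}u_{ij}/N)·A + (N/(N−1))·B·C`,
where `A, B, C` are the quantities built from `∇H(∇u)`, `Tr(∇²H(∇u)∇²u)` and
`∇H(∇u)·(∇²u ∇H(∇u))`, for a norm `H` whose Hessian is positive semidefinite of rank
`N−1` away from the origin. -/
theorem bochner_type_inequality
    (N : ℕ) (hN : 2 ≤ N) (p : ℝ) (hp : 1 < p)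
    (H : EuclideanSpace ℝ (Fin N) → ℝ)
    (hConv : ConvexOn ℝ Set.univ H)
    (hNonneg : ∀ ξ, 0 ≤ H ξ)
    (hZero : ∀ ξ, H ξ = 0 ↔ ξ = 0)
    (hHom : ∀ (t : ℝ) (ξ : EuclideanSpace ℝ (Fin N)), H (t • ξ) = |t| * H ξ)
    (hC2 : ContDiffOn ℝ 2 H {(0 : EuclideanSpace ℝ (Fin N))}ᶜ)
    (e : Fin N → EuclideanSpace ℝ (Fin N)) (he : ∀ i, e i = EuclideanSpace.single i 1)
    (hPSD : ∀ ξ : EuclideanSpace ℝ (Fin N), ξ ≠ 0 →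
      (Matrix.of fun i j : Fin N => iteratedFDeriv ℝ 2 H ξ ![e i, e j]).PosSemidef)
    (hrank : ∀ ξ : EuclideanSpace ℝ (Fin N), ξ ≠ 0 →
      (Matrix.of fun i j : Fin N => iteratedFDeriv ℝ 2 H ξ ![e i, e j]).rank = N - 1)
    (E : Set (EuclideanSpace ℝ (Fin N))) (hE : IsOpen E)
    (u : EuclideanSpace ℝ (Fin N) → ℝ) (hu : ContDiffOn ℝ 3 u E)
    (hgrad : ∀ x ∈ E, gradient u x ≠ 0) :
    ∀ x ∈ E,
      let ξ := gradient u x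
      let Hv := H ξ
      let g := gradient H ξ
      let MH : Fin N → Fin N → ℝ := fun i j => iteratedFDeriv ℝ 2 H ξ ![e i, e j]
      let M2 : Fin N → Fin N → ℝ := fun k l =>
        iteratedFDeriv ℝ 2 (fun η => (H η) ^ 2) ξ ![e k, e l]
      let Mu : Fin N → Fin N → ℝ := fun i j => iteratedFDeriv ℝ 2 u x ![e i, e j]
      let a : Fin N → Fin N → ℝ := fun i j =>
        (1 / p) * iteratedFDeriv ℝ 2 (fun η => H η ^ p) ξ ![e i, e j]
      let S := ∑ i, ∑ j, g i * Mu i j * g j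
      let T := ∑ i, ∑ j, MH i j * Mu j i
      let A := S + Hv * T
      let B := (1 / N) * Hv ^ (p - 1) * T - ((N - 1 : ℝ) / N) * (p - 1) * Hv ^ (p - 2) * S
      let C := (1 / N) * Hv * T - ((N - 1 : ℝ) / N) * S
      ((∑ i, ∑ j, a i j * Mu i j) / N) * A + ((N : ℝ) / (N - 1)) * B * C ≤
        ∑ i, ∑ j, ∑ k, ∑ l, a i j * M2 k l * Mu i k * Mu j l :=
  bochner_type_inequality_general N hN p hp H hNonneg hZero hC2 e he hPSD E hE u hu hgrad
end
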